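/- Let ε > 0 and let (u, m) be a classical solution of the discounted MFG system. Then ∫_{T^d} ( (1/2)|Du|² − V(x) + g(m) ) m dx = ε ∫_{T^d} u dx. -/

import Mathlib

/-! Using the Hamilton–Jacobi equation for `g(m)` and the Fokker–Planck equation for `ε m`, the
integrand becomes `m |Du|² + u div(m Du) + ε u`. The first two terms are `div(u m Du)`, which
integrates to zero over a period cell. -/

open MeasureTheory Set

noncomputable def pd (d : ℕ) (i : Fin d) (f : (Fin d → ℝ) → ℝ) : (Fin d → ℝ) → ℝ :=
  fun x => fderiv ℝ f x (Pi.single i 1)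

noncomputable def gradSq (d : ℕ) (u : (Fin d → ℝ) → ℝ) (x : Fin d → ℝ) : ℝ :=
  ∑ i, pd d i u x ^ 2

noncomputable def divUp (d : ℕ) (m u : (Fin d → ℝ) → ℝ) (x : Fin d → ℝ) : ℝ :=
  ∑ i, pd d i (fun y => m y * pd d i u y) x

/-- `f` is `ℤ^d`-periodic, i.e. a function on the flat torus `T^d`. -/
def ZPer (d : ℕ) (f : (Fin d → ℝ) → ℝ) : Prop :=
  ∀ (x : Fin d → ℝ) (k : Fin d → ℤ), f (x + fun i => (k i : ℝ)) = f x

/-- `f` has finite `α`-Hölder seminorm. -/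
def HolderSemi (α : ℝ) {E : Type*} [PseudoMetricSpace E] (f : E → ℝ) : Prop :=
  ∃ C : ℝ, 0 ≤ C ∧ ∀ x y, |f x - f y| ≤ C * dist x y ^ α

/-- `f` is of class `C^{1,α}`. -/
def C1Hold (d : ℕ) (α : ℝ) (f : (Fin d → ℝ) → ℝ) : Prop :=
  ContDiff ℝ 1 f ∧ ∀ i, HolderSemi α (pd d i f)

/-- `f` is of class `C^{2,α}`. -/
def C2Hold (d : ℕ) (α : ℝ) (f : (Fin d → ℝ) → ℝ) : Prop :=
  ContDiff ℝ 2 f ∧ ∀ i j, HolderSemi α (pd d i (pd d j f))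

/-- `f` is locally `α`-Hölder on `s`. -/
def LocHolderOn (α : ℝ) (f : ℝ → ℝ) (s : Set ℝ) : Prop :=
  ∀ K : Set ℝ, IsCompact K → K ⊆ s →
    ∃ C : ℝ, 0 ≤ C ∧ ∀ x ∈ K, ∀ y ∈ K, |f x - f y| ≤ C * dist x y ^ α

/-- Standing hypotheses on `g`: strictly increasing and continuous on `[0,∞)`,
of class `C^{1,α}` on `(0,∞)`. -/
def Ghyp (α : ℝ) (g : ℝ → ℝ) : Prop :=
  StrictMonoOn g (Ici 0) ∧ ContinuousOn g (Ici 0) ∧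
    DifferentiableOn ℝ g (Ioi 0) ∧ LocHolderOn α (deriv g) (Ioi 0)

/-- Standing hypotheses on `V`: a `C^{1,α}` function on the torus. -/
def Vhyp (d : ℕ) (α : ℝ) (V : (Fin d → ℝ) → ℝ) : Prop :=
  ZPer d V ∧ C1Hold d α V

/-- The oscillation of `V` over the torus. -/
noncomputable def oscV (d : ℕ) (V : (Fin d → ℝ) → ℝ) : ℝ :=
  sSup (V '' Icc (0 : Fin d → ℝ) 1) - sInf (V '' Icc (0 : Fin d → ℝ) 1)

/-- Assumption (A1): `g⁻¹(g(1) − osc V) > 0`, i.e. `g(1) − osc V` is attained by `g` on `(0,∞)`. -/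
def A1 (d : ℕ) (g : ℝ → ℝ) (V : (Fin d → ℝ) → ℝ) : Prop :=
  g 1 - oscV d V ∈ g '' Ioi (0 : ℝ)

/-- Assumption (A2). -/
def A2 (g : ℝ → ℝ) : Prop :=
  ∃ C₁ C₂ β : ℝ, 0 < C₁ ∧ 0 < C₂ ∧
    (∀ z : ℝ, 0 < z → C₁ * z ^ β ≤ deriv g z) ∧
    (∀ z : ℝ, 0 ≤ z → g z ≤ C₂ + z * g z)

/-- A classical solution `(u, m)` of the discounted MFG system
`ε u + |Du|²/2 + V = g(m)`, `ε m − div(m Du) = ε` on `T^d`. -/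
structure DiscSol (d : ℕ) (α : ℝ) (g : ℝ → ℝ) (V : (Fin d → ℝ) → ℝ) (ε : ℝ)
    (u m : (Fin d → ℝ) → ℝ) : Prop where
  per_u : ZPer d u
  per_m : ZPer d m
  reg_u : C2Hold d α u
  reg_m : C1Hold d α m
  m_nonneg : ∀ x, 0 ≤ m x
  hj : ∀ x, ε * u x + (1 / 2) * gradSq d u x + V x = g (m x)
  fp : ∀ x, ε * m x - divUp d m u x = ε

/-- A classical solution `(u, m, H̄)` of the ergodic MFG system
`|Du|²/2 + V = g(m) + H̄`, `−div(m Du) = 0`, `m ≥ 0`, `∫ m = 1` on `T^d`. -/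
structure ErgSol (d : ℕ) (α : ℝ) (g : ℝ → ℝ) (V : (Fin d → ℝ) → ℝ)
    (u m : (Fin d → ℝ) → ℝ) (H : ℝ) : Prop where
  per_u : ZPer d u
  per_m : ZPer d m
  reg_u : C2Hold d α u
  reg_m : C1Hold d α m
  m_nonneg : ∀ x, 0 ≤ m x
  m_mass : (∫ x in Icc (0 : Fin d → ℝ) 1, m x) = 1
  hj : ∀ x, (1 / 2) * gradSq d u x + V x = g (m x) + H
  fp : ∀ x, divUp d m u x = 0

lemma contDiff_pd {d : ℕ} {n : WithTop ℕ∞} {f : (Fin d → ℝ) → ℝ} (hf : ContDiff ℝ (n + 1) f)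
    (i : Fin d) : ContDiff ℝ n (pd d i f) :=
  (hf.fderiv_right le_rfl).clm_apply contDiff_const

lemma continuous_pd {d : ℕ} {f : (Fin d → ℝ) → ℝ} (hf : ContDiff ℝ 1 f) (i : Fin d) :
    Continuous (pd d i f) :=
  (contDiff_pd (n := 0) (by simpa using hf) i).continuous

lemma pd_mul {d : ℕ} {f h : (Fin d → ℝ) → ℝ} {x : Fin d → ℝ} (i : Fin d)
    (hf : DifferentiableAt ℝ f x) (hh : DifferentiableAt ℝ h x) :
    pd d i (fun y => f y * h y) x = pd d i f x * h x + f x * pd d i h x := by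
  simp only [pd, fderiv_fun_mul hf hh, add_apply, smul_apply, smul_eq_mul]
  ring

lemma ZPer.mul {d : ℕ} {f h : (Fin d → ℝ) → ℝ} (hf : ZPer d f) (hh : ZPer d h) :
    ZPer d (fun y => f y * h y) := fun x k => by
  simp only [hf x k, hh x k]

lemma ZPer.pd {d : ℕ} {f : (Fin d → ℝ) → ℝ} (hf : ZPer d f) (i : Fin d) : ZPer d (pd d i f) :=
  fun x k => by
    have hshift : (fun y => f (y + fun j => (k j : ℝ))) = f := funext fun y => hf y k
    show fderiv ℝ f _ _ = fderiv ℝ f x _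
    rw [← fderiv_comp_add_right, hshift]

lemma continuous_gradSq {d : ℕ} {u : (Fin d → ℝ) → ℝ} (hu : ContDiff ℝ 1 u) :
    Continuous (gradSq d u) :=
  continuous_finsetSum _ fun i _ => (continuous_pd hu i).pow 2

lemma continuous_divUp {d : ℕ} {m u : (Fin d → ℝ) → ℝ} (hm : ContDiff ℝ 1 m)
    (hu : ContDiff ℝ 2 u) : Continuous (divUp d m u) :=
  continuous_finsetSum _ fun i _ => continuous_pd (hm.mul (contDiff_pd hu i)) i

/-- The divergence theorem on the unit cube: the fluxes through opposite faces cancel by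
periodicity. -/
theorem integral_unitCube_divergence_eq_zero {d : ℕ} {F : Fin d → (Fin d → ℝ) → ℝ}
    (hF : ∀ i, ContDiff ℝ 1 (F i)) (hper : ∀ i, ZPer d (F i)) :
    ∫ x in Icc (0 : Fin d → ℝ) 1, ∑ i, pd d i (F i) x = 0 := by
  cases d with
  | zero => simp
  | succ n =>
    have hint : IntegrableOn (fun x => ∑ i, pd (n + 1) i (F i) x) (Icc 0 1) :=
      (continuous_finsetSum _ fun i _ => continuous_pd (hF i) i).integrableOn_Icc
    unfold pd
    rw [integral_divergence_of_hasFDerivAt_off_countable' 0 1 (fun _ => zero_le_one) F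
      (fun i x => fderiv ℝ (F i) x) ∅ countable_empty (fun i => (hF i).continuous.continuousOn)
      (fun x _ i => ((hF i).differentiable one_ne_zero x).hasFDerivAt) hint]
    refine Finset.sum_eq_zero fun i _ => sub_eq_zero.2 <|
      setIntegral_congr_fun measurableSet_Icc fun x _ => ?_
    have hface : Fin.insertNth i ((1 : Fin (n + 1) → ℝ) i) x
        = Fin.insertNth i ((0 : Fin (n + 1) → ℝ) i) x
          + fun j => ((Pi.single i 1 : Fin (n + 1) → ℤ) j : ℝ) := by
      funext j
      rcases eq_or_ne j i with rfl | hj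
      · simp
      · obtain ⟨k, rfl⟩ := Fin.exists_succAbove_eq hj
        simp [Fin.insertNth_apply_succAbove, Pi.single_apply, Fin.succAbove_ne i k]
    rw [hface, hper i _ (Pi.single i 1)]

lemma sum_pd_mul_mul_pd {d : ℕ} {m u : (Fin d → ℝ) → ℝ} (hm : ContDiff ℝ 1 m)
    (hu : ContDiff ℝ 2 u) (x : Fin d → ℝ) :
    ∑ i, pd d i (fun y => u y * (m y * pd d i u y)) x
      = m x * gradSq d u x + u x * divUp d m u x := by
  simp only [gradSq, divUp, Finset.mul_sum, ← Finset.sum_add_distrib]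
  refine Finset.sum_congr rfl fun i _ => ?_
  rw [pd_mul i (hu.differentiable two_ne_zero x)
    ((hm.mul (contDiff_pd hu i)).differentiable one_ne_zero x)]
  ring

theorem integral_mul_gradSq_add_mul_divUp_eq_zero {d : ℕ} {m u : (Fin d → ℝ) → ℝ}
    (hm : ContDiff ℝ 1 m) (hu : ContDiff ℝ 2 u) (hm_per : ZPer d m) (hu_per : ZPer d u) :
    ∫ x in Icc (0 : Fin d → ℝ) 1, (m x * gradSq d u x + u x * divUp d m u x) = 0 := by
  simp only [← sum_pd_mul_mul_pd hm hu]
  exact integral_unitCube_divergence_eq_zero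
    (fun i => (hu.of_le one_le_two).mul (hm.mul (contDiff_pd hu i)))
    (fun i => hu_per.mul (hm_per.mul (hu_per.pd i)))

theorem stmt12_general (d : ℕ) (α : ℝ)
    (g : ℝ → ℝ) (V : (Fin d → ℝ) → ℝ)
    (ε : ℝ) (u m : (Fin d → ℝ) → ℝ)
    (hsol : DiscSol d α g V ε u m) :
    (∫ x in Icc (0 : Fin d → ℝ) 1,
        ((1 / 2) * gradSq d u x - V x + g (m x)) * m x)
      = ε * ∫ x in Icc (0 : Fin d → ℝ) 1, u x := by
  have hu : ContDiff ℝ 2 u := hsol.reg_u.1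
  have hm : ContDiff ℝ 1 m := hsol.reg_m.1
  have hpoint : ∀ x, ((1 / 2) * gradSq d u x - V x + g (m x)) * m x
      = (m x * gradSq d u x + u x * divUp d m u x) + ε * u x := fun x => by
    rw [← hsol.hj x, show divUp d m u x = ε * m x - ε by linarith [hsol.fp x]]
    ring
  have hint : IntegrableOn (fun x => m x * gradSq d u x + u x * divUp d m u x) (Icc 0 1) :=
    ((hm.continuous.mul (continuous_gradSq (hu.of_le one_le_two))).add
      (hu.continuous.mul (continuous_divUp hm hu))).integrableOn_Icc
  simp only [hpoint]
  have hint_u : IntegrableOn (fun x => ε * u x) (Icc 0 1) :=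
    (continuous_const.mul hu.continuous).integrableOn_Icc
  rw [integral_add hint hint_u, integral_mul_gradSq_add_mul_divUp_eq_zero hm hu hsol.per_m hsol.per_u, integral_const_mul,
    zero_add]

theorem stmt12 (d : ℕ) (α : ℝ) (hα0 : 0 < α) (hα1 : α < 1)
    (g : ℝ → ℝ) (V : (Fin d → ℝ) → ℝ) (hg : Ghyp α g) (hV : Vhyp d α V)
    (ε : ℝ) (hε : 0 < ε) (u m : (Fin d → ℝ) → ℝ)
    (hsol : DiscSol d α g V ε u m) :
    (∫ x in Icc (0 : Fin d → ℝ) 1,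
        ((1 / 2) * gradSq d u x - V x + g (m x)) * m x)
      = ε * ∫ x in Icc (0 : Fin d → ℝ) 1, u x :=
  stmt12_general d α g V ε u m hsol
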